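/- arXiv:2202.09114 — 2 statements merged into one kernel-verified Lean document; each statement's English description precedes it below -/
import Mathlib

section
/- Let 0 < q < 1 and let α, z ∈ ℂ with q < |z| < 1 and q < |α| < 1, such that αq^n ≠ 1 and zq^n ≠ 1 for all integers n. Then ∑_{n=-∞}^{∞} z^n/(1-αq^n) = ∑_{n=-∞}^{∞} α^n/(1-zq^n). -/
open Complex

private lemma bilateral_aux (q : ℝ) (hq0 : 0 < q) (hq1 : q < 1) (α z : ℂ)
    (hz1 : (q:ℝ) < ‖z‖) (hz2 : ‖z‖ < 1)
    (hα1 : (q:ℝ) < ‖α‖) (hα2 : ‖α‖ < 1) :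
    (∑' n : ℤ, z^n / (1 - α * (q:ℂ)^n)) =
      (∑' p : ℕ × ℕ, z^p.1 * α^p.2 * (q:ℂ)^(p.1*p.2)) +
      (∑' p : ℕ × ℕ, -(z^(-((p.1:ℤ)+1)) * α^(-((p.2:ℤ)+1)) * (q:ℂ)^((p.1+1)*(p.2+1)))) := by
  set w : ℂ := (q:ℂ) with hw
  have hwabs : ‖w‖ = q := by simp [hw, abs_of_pos hq0]
  have hw0 : w ≠ 0 := by
    rw [hw]
    exact_mod_cast Complex.ofReal_ne_zero.mpr hq0.ne'
  have habsz : 0 < ‖z‖ := lt_trans hq0 hz1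
  have habsα : 0 < ‖α‖ := lt_trans hq0 hα1
  have hz0 : z ≠ 0 := by
    intro h; rw [h] at hz1; simp at hz1; linarith
  have hα0 : α ≠ 0 := by
    intro h; rw [h] at hα1; simp at hα1; linarith
  -- summability of the first double family
  have sumA : Summable (fun p : ℕ × ℕ => z^p.1 * α^p.2 * w^(p.1*p.2)) := by
    apply Summable.of_norm_bounded
      (g := fun p : ℕ × ℕ => (‖z‖)^p.1 * (‖α‖)^p.2)
    · exact Summable.mul_of_nonneg (summable_geometric_of_lt_one habsz.le hz2)
        (summable_geometric_of_lt_one habsα.le hα2)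
        (fun n => pow_nonneg habsz.le n) (fun n => pow_nonneg habsα.le n)
    · intro p
      simp only [norm_mul, norm_pow, hwabs]
      have h1 : q ^ (p.1 * p.2) ≤ 1 := pow_le_one₀ hq0.le hq1.le
      calc ‖z‖ ^ p.1 * ‖α‖ ^ p.2 * q ^ (p.1 * p.2)
          ≤ ‖z‖ ^ p.1 * ‖α‖ ^ p.2 * 1 := by gcongr
        _ = _ := by ring
  -- summability of the second double family
  have sumB : Summable (fun p : ℕ × ℕ =>
      -(z^(-((p.1:ℤ)+1)) * α^(-((p.2:ℤ)+1)) * w^((p.1+1)*(p.2+1)))) := by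
    apply Summable.of_norm_bounded
      (g := fun p : ℕ × ℕ => (q / ‖z‖)^(p.1+1) * ((q / ‖α‖)^p.2 / ‖α‖))
    · apply Summable.mul_of_nonneg
        (f := fun k : ℕ => (q / ‖z‖)^(k+1))
        (g := fun m : ℕ => (q / ‖α‖)^m / ‖α‖)
      · have h1 : (0:ℝ) ≤ q / ‖z‖ := div_nonneg hq0.le habsz.le
        have h2 : q / ‖z‖ < 1 := (div_lt_one habsz).mpr hz1
        simpa [pow_succ] using (summable_geometric_of_lt_one h1 h2).mul_right (q / ‖z‖)
      · have h1 : (0:ℝ) ≤ q / ‖α‖ := div_nonneg hq0.le habsα.le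
        have h2 : q / ‖α‖ < 1 := (div_lt_one habsα).mpr hα1
        exact (summable_geometric_of_lt_one h1 h2).div_const _
      · intro n; positivity
      · intro n; positivity
    · rintro ⟨k, m⟩
      simp only [norm_neg, norm_mul, norm_zpow, norm_pow, hwabs]
      have hzk : ‖z‖ ^ (-((k:ℤ)+1)) = (‖z‖ ^ (k+1))⁻¹ := by
        rw [zpow_neg]
        congr 1
      have hαm : ‖α‖ ^ (-((m:ℤ)+1)) = (‖α‖ ^ (m+1))⁻¹ := by
        rw [zpow_neg]
        congr 1
      rw [hzk, hαm]
      have key : q ^ ((k+1)*(m+1)) ≤ q^(k+1) * q^m := by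
        have h2 : q ^ ((k+1)*(m+1)) = q^(k+1) * q^((k+1)*m) := by
          rw [← pow_add]; ring_nf
        rw [h2]
        have h3 : q^((k+1)*m) ≤ q^m :=
          pow_le_pow_of_le_one hq0.le hq1.le (Nat.le_mul_of_pos_left m k.succ_pos)
        have h4 : (0:ℝ) ≤ q^(k+1) := by positivity
        nlinarith
      calc (‖z‖ ^ (k+1))⁻¹ * (‖α‖ ^ (m+1))⁻¹ * q ^ ((k+1)*(m+1))
          ≤ (‖z‖ ^ (k+1))⁻¹ * (‖α‖ ^ (m+1))⁻¹ * (q^(k+1) * q^m) := by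
            have h5 : (0:ℝ) ≤ (‖z‖ ^ (k+1))⁻¹ * (‖α‖ ^ (m+1))⁻¹ := by
              positivity
            nlinarith
        _ = (q / ‖z‖)^(k+1) * ((q / ‖α‖)^m / ‖α‖) := by
            ring
  -- row sums: nonnegative part
  have rowA : ∀ n : ℕ, HasSum (fun m : ℕ => z^n * α^m * w^(n*m))
      (z^(n:ℤ) / (1 - α * w^(n:ℤ))) := by
    intro n
    have hlt : ‖α * w^n‖ < 1 := by
      rw [norm_mul, norm_pow, hwabs]
      calc ‖α‖ * q ^ n ≤ ‖α‖ * 1 := by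
            gcongr
            exact pow_le_one₀ hq0.le hq1.le
        _ < 1 := by simpa using hα2
    have hgeo := (hasSum_geometric_of_norm_lt_one hlt).mul_left (z^n)
    have heq : (fun m : ℕ => z^n * (α * w^n)^m) = (fun m : ℕ => z^n * α^m * w^(n*m)) := by
      funext m
      rw [mul_pow, ← pow_mul]
      ring
    rw [heq] at hgeo
    simpa [zpow_natCast, div_eq_mul_inv] using hgeo
  -- row sums: negative part
  have rowB : ∀ k : ℕ, HasSum (fun m : ℕ =>
      -(z^(-((k:ℤ)+1)) * α^(-((m:ℤ)+1)) * w^((k+1)*(m+1))))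
      (z^(-((k:ℤ)+1)) / (1 - α * w^(-((k:ℤ)+1)))) := by
    intro k
    set v : ℂ := α⁻¹ * w^(k+1) with hv
    have hv0 : v ≠ 0 := mul_ne_zero (inv_ne_zero hα0) (pow_ne_zero _ hw0)
    have hvlt : ‖v‖ < 1 := by
      rw [hv, norm_mul, norm_inv, norm_pow, hwabs]
      have h1 : q ^ (k+1) ≤ q := by
        calc q ^ (k+1) ≤ q ^ 1 := pow_le_pow_of_le_one hq0.le hq1.le (by omega)
          _ = q := pow_one q
      have h2 : (‖α‖)⁻¹ * q^(k+1) ≤ (‖α‖)⁻¹ * q :=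
        mul_le_mul_of_nonneg_left h1 (by positivity)
      have h3 : (‖α‖)⁻¹ * q < 1 := by
        rw [inv_mul_lt_iff₀ habsα, mul_one]; exact hα1
      linarith
    have hv1 : (1:ℂ) - v ≠ 0 := by
      intro h
      have hv2 : v = 1 := by linear_combination -h
      rw [hv2] at hvlt; simp at hvlt
    have hgeo := (hasSum_geometric_of_norm_lt_one hvlt).mul_left (-(z^(-((k:ℤ)+1)) * v))
    have heq : (fun m : ℕ => -(z^(-((k:ℤ)+1)) * v) * v^m)
        = (fun m : ℕ => -(z^(-((k:ℤ)+1)) * α^(-((m:ℤ)+1)) * w^((k+1)*(m+1)))) := by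
      funext m
      have hvm : v^(m+1) = α^(-((m:ℤ)+1)) * w^((k+1)*(m+1)) := by
        rw [hv, mul_pow, ← pow_mul]
        congr 1
        rw [← zpow_natCast α⁻¹, inv_zpow, ← zpow_neg]
        push_cast
        norm_num
      calc -(z^(-((k:ℤ)+1)) * v) * v^m = -(z^(-((k:ℤ)+1)) * v^(m+1)) := by ring
        _ = _ := by rw [hvm]; ring
    rw [heq] at hgeo
    have hu : α * w^(-((k:ℤ)+1)) = v⁻¹ := by
      rw [hv, mul_inv, inv_inv]
      congr 1
    have h1v : (1:ℂ) - v⁻¹ ≠ 0 := by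
      rw [sub_ne_zero]
      intro h
      have hv2 : v = 1 := by
        field_simp at h
        simpa using h
      rw [hv2] at hvlt; simp at hvlt
    clear_value v
    have hval : -(z^(-((k:ℤ)+1)) * v) * (1 - v)⁻¹
        = z^(-((k:ℤ)+1)) / (1 - α * w^(-((k:ℤ)+1))) := by
      rw [hu]
      have hx : (1:ℂ) - v⁻¹ = -(1-v) * v⁻¹ := by
        field_simp
        ring
      rw [hx, div_eq_mul_inv, mul_inv, inv_inv, inv_neg]
      ring
    rwa [hval] at hgeo
  -- assemble
  have h1 : HasSum (fun n : ℕ => z^(n:ℤ) / (1 - α * w^(n:ℤ)))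
      (∑' p : ℕ × ℕ, z^p.1 * α^p.2 * w^(p.1*p.2)) :=
    sumA.hasSum.prod_fiberwise rowA
  have h2 : HasSum (fun k : ℕ => z^(-((k:ℤ)+1)) / (1 - α * w^(-((k:ℤ)+1))))
      (∑' p : ℕ × ℕ, -(z^(-((p.1:ℤ)+1)) * α^(-((p.2:ℤ)+1)) * w^((p.1+1)*(p.2+1)))) :=
    sumB.hasSum.prod_fiberwise rowB
  have h3 := HasSum.of_nat_of_neg_add_one (f := fun n : ℤ => z^n / (1 - α * w^n)) h1 h2
  exact h3.tsum_eq

/-- Symmetry of the bilateral series: for `0 < q < 1`, `q < |z| < 1`, `q < |α| < 1`,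
with `αq^n ≠ 1` and `zq^n ≠ 1` for all integers `n`,
`∑_{n∈ℤ} z^n/(1-αq^n) = ∑_{n∈ℤ} α^n/(1-zq^n)`. -/
theorem bilateral_symmetry (q : ℝ) (hq0 : 0 < q) (hq1 : q < 1) (α z : ℂ)
    (hz1 : (q:ℝ) < ‖z‖) (hz2 : ‖z‖ < 1)
    (hα1 : (q:ℝ) < ‖α‖) (hα2 : ‖α‖ < 1)
    (hne : ∀ n : ℤ, α * (q:ℂ)^n ≠ 1 ∧ z * (q:ℂ)^n ≠ 1) :
    (∑' n : ℤ, z^n / (1 - α * (q:ℂ)^n)) = ∑' n : ℤ, α^n / (1 - z * (q:ℂ)^n) := by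
  rw [bilateral_aux q hq0 hq1 α z hz1 hz2 hα1 hα2,
      bilateral_aux q hq0 hq1 z α hα1 hα2 hz1 hz2]
  congr 1
  · rw [← Equiv.tsum_eq (Equiv.prodComm ℕ ℕ)
      (fun p : ℕ × ℕ => α^p.1 * z^p.2 * (q:ℂ)^(p.1*p.2))]
    apply tsum_congr
    rintro ⟨a, b⟩
    simp only [Equiv.prodComm_apply, Prod.swap_prod_mk]
    rw [Nat.mul_comm b a]
    ring
  · rw [← Equiv.tsum_eq (Equiv.prodComm ℕ ℕ)
      (fun p : ℕ × ℕ => -(α^(-((p.1:ℤ)+1)) * z^(-((p.2:ℤ)+1)) * (q:ℂ)^((p.1+1)*(p.2+1))))]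
    apply tsum_congr
    rintro ⟨a, b⟩
    simp only [Equiv.prodComm_apply, Prod.swap_prod_mk]
    rw [Nat.mul_comm (b+1) (a+1)]
    ring
end

section
/- Let 0 < ρ < 1 and a, z ∈ ℂ with ρ < |a| < 1 and ρ ≤ |z| ≤ 1. Then ∑_{n=-∞}^{∞} (conj(a)z)^n/(1+ρ^{2n+1}) = ∑_{m=-∞}^{∞} (-1)^m ρ^m/(ρ^{2m} - conj(a)z), i.e., the two bilateral series representations of 2π S(z,a) agree. -/
open Complex

set_option maxHeartbeats 1000000 in

/-- For `0 < ρ < 1`, `ρ < |a| < 1` and `ρ ≤ |z| ≤ 1`, the two bilateral series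
representations of `2π S(z,a)` agree:
`∑_{n∈ℤ} (conj a·z)^n/(1+ρ^{2n+1}) = ∑_{m∈ℤ} (-1)^m ρ^m/(ρ^{2m} - conj a·z)`. -/
theorem szego_two_series_agree (ρ : ℝ) (hρ0 : 0 < ρ) (hρ1 : ρ < 1) (a z : ℂ)
    (ha1 : ρ < ‖a‖) (ha2 : ‖a‖ < 1)
    (hz1 : ρ ≤ ‖z‖) (hz2 : ‖z‖ ≤ 1) :
    (∑' n : ℤ, ((starRingEnd ℂ) a * z)^n / (1 + (ρ:ℂ)^(2*n+1))) =
    ∑' m : ℤ, (-1:ℂ)^m * (ρ:ℂ)^m / ((ρ:ℂ)^(2*m) - (starRingEnd ℂ) a * z) := by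
  have hρ0' : (0:ℝ) ≤ ρ := hρ0.le
  obtain ⟨w, hwdef⟩ : ∃ w : ℂ, w = (starRingEnd ℂ) a * z := ⟨_, rfl⟩
  rw [← hwdef]
  have hwabs : ‖w‖ = ‖a‖ * ‖z‖ := by
    rw [hwdef]; rw [norm_mul, Complex.norm_conj]
  have hW1 : ‖w‖ < 1 := by
    rw [hwabs]
    calc ‖a‖ * ‖z‖ ≤ ‖a‖ * 1 :=
          mul_le_mul_of_nonneg_left hz2 (norm_nonneg a)
      _ < 1 := by simpa using ha2
  have hW2 : ρ^2 < ‖w‖ := by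
    rw [hwabs, sq]
    exact mul_lt_mul ha1 hz1 hρ0 (norm_nonneg a)
  have hWpos : 0 < ‖w‖ := lt_of_le_of_lt (by positivity) hW2
  have hw0 : w ≠ 0 := by
    intro h
    rw [h, norm_zero] at hWpos
    exact lt_irrefl 0 hWpos
  have hr0 : (ρ:ℂ) ≠ 0 := by exact_mod_cast hρ0.ne'
  have hrn : ‖(ρ:ℂ)‖ = ρ := by
    rw [Complex.norm_real, Real.norm_eq_abs, abs_of_pos hρ0]
  -- basic denominator facts
  have hgeo1 : ∀ n : ℕ, ‖-((ρ:ℂ)^(2*n+1))‖ < 1 := by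
    intro n
    rw [norm_neg, norm_pow, hrn]
    calc ρ^(2*n+1) ≤ ρ^1 := pow_le_pow_of_le_one hρ0' hρ1.le (by omega)
      _ = ρ := pow_one ρ
      _ < 1 := hρ1
  have hq2 : ∀ m : ℕ, ‖w * (ρ:ℂ)^(2*m)‖ < 1 := by
    intro m
    rw [norm_mul, norm_pow, hrn]
    calc ‖w‖ * ρ^(2*m) ≤ ‖w‖ * 1 :=
          mul_le_mul_of_nonneg_left (pow_le_one₀ hρ0' hρ1.le) (norm_nonneg w)
      _ = ‖w‖ := mul_one _
      _ < 1 := hW1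
  have hden2 : ∀ m : ℕ, (1:ℂ) - w * (ρ:ℂ)^(2*m) ≠ 0 := by
    intro m h
    rw [sub_eq_zero] at h
    have := hq2 m
    rw [← h, norm_one] at this
    exact lt_irrefl 1 this
  have hq3 : ∀ m : ℕ, ‖w⁻¹ * (ρ:ℂ)^(2*m+2)‖ < 1 := by
    intro m
    rw [norm_mul, norm_inv, norm_pow, hrn]
    have h1 : ρ^(2*m+2) < ‖w‖ :=
      lt_of_le_of_lt (pow_le_pow_of_le_one hρ0' hρ1.le (show 2 ≤ 2*m+2 by omega)) hW2
    calc ‖w‖⁻¹ * ρ^(2*m+2) < ‖w‖⁻¹ * ‖w‖ :=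
          mul_lt_mul_of_pos_left h1 (inv_pos.mpr hWpos)
      _ = 1 := inv_mul_cancel₀ hWpos.ne'
  have hρ2m2 : ∀ m : ℕ, ρ^(2*m+2) < ‖w‖ := fun m =>
    lt_of_le_of_lt (pow_le_pow_of_le_one hρ0' hρ1.le (show 2 ≤ 2*m+2 by omega)) hW2
  have hden3 : ∀ m : ℕ, w - (ρ:ℂ)^(2*m+2) ≠ 0 := by
    intro m h
    rw [sub_eq_zero] at h
    have := hρ2m2 m
    rw [h, norm_pow, hrn] at this
    exact lt_irrefl _ this
  have hden1n : ∀ k : ℕ, (1:ℂ) + (ρ:ℂ)^k ≠ 0 := by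
    intro k
    have h1 : (0:ℝ) < 1 + ρ^k := by positivity
    have h2 : ((1 + ρ^k : ℝ) : ℂ) ≠ 0 := by exact_mod_cast h1.ne'
    simpa using h2
  -- the double families
  set F1 : ℕ × ℕ → ℂ := fun p => w^p.1 * (-((ρ:ℂ)^(2*p.1+1)))^p.2 with hF1def
  have hF1sum : Summable F1 := by
    apply Summable.of_norm_bounded (g := fun p : ℕ × ℕ => ‖w‖^p.1 * ρ^p.2)
      ((summable_geometric_of_lt_one (norm_nonneg w) hW1).mul_of_nonneg
        (summable_geometric_of_lt_one hρ0' hρ1)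
        (fun n => pow_nonneg (norm_nonneg w) n) (fun m => pow_nonneg hρ0' m))
    rintro ⟨n, m⟩
    simp only [hF1def, norm_mul, norm_pow, norm_neg, hrn]
    have h2 : (ρ^(2*n+1))^m ≤ ρ^m := by
      rw [← pow_mul]
      exact pow_le_pow_of_le_one hρ0' hρ1.le (Nat.le_mul_of_pos_left m (by omega))
    exact mul_le_mul_of_nonneg_left h2 (pow_nonneg (norm_nonneg w) n)
  set F2 : ℕ × ℕ → ℂ :=
    fun p => (-1:ℂ)^p.2 * (w⁻¹)^(p.1+1) * (ρ:ℂ)^((2*p.1+1)*(p.2+1)) with hF2def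
  have hF2sum : Summable F2 := by
    apply Summable.of_norm_bounded (g := fun p : ℕ × ℕ => (ρ/‖w‖) * ((ρ^2/‖w‖)^p.1 * ρ^p.2))
      (Summable.mul_left _
        ((summable_geometric_of_lt_one (by positivity) ((div_lt_one hWpos).mpr hW2)).mul_of_nonneg
          (summable_geometric_of_lt_one hρ0' hρ1)
          (fun n => pow_nonneg (by positivity) n) (fun m => pow_nonneg hρ0' m)))
    rintro ⟨n, m⟩
    have h1 : ‖F2 (n, m)‖ = ρ^((2*n+1)*(m+1)) * (‖w‖⁻¹)^(n+1) := by
      simp only [hF2def, norm_mul, norm_pow, norm_neg, norm_one, norm_inv, hrn, one_pow, one_mul]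
      ring
    rw [h1]
    have h2 : ρ^((2*n+1)*(m+1)) ≤ ρ^(2*n+m+1) :=
      pow_le_pow_of_le_one hρ0' hρ1.le (by nlinarith)
    calc ρ^((2*n+1)*(m+1)) * (‖w‖⁻¹)^(n+1)
        ≤ ρ^(2*n+m+1) * (‖w‖⁻¹)^(n+1) :=
          mul_le_mul_of_nonneg_right h2 (by positivity)
      _ = ρ/‖w‖ * ((ρ^2/‖w‖)^n * ρ^m) := by
          rw [div_pow]
          field_simp
          ring_nf
          rw [show ρ * ρ ^ (n * 2) * ρ ^ m * ‖w‖ * ‖w‖ ^ n * ‖w‖⁻¹ * ‖w‖⁻¹ ^ n = ρ * ρ ^ (n * 2) * ρ ^ m * ((‖w‖ * ‖w‖⁻¹) * (‖w‖ * ‖w‖⁻¹) ^ n) by ring, mul_inv_cancel₀ hWpos.ne', one_pow, mul_one, mul_one]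
  -- row sums of F1 give the nonnegative part of the LHS
  have hE1a : ∀ n : ℕ, HasSum (fun m => F1 (n, m))
      (w^(n:ℤ) / (1 + (ρ:ℂ)^(2*(n:ℤ)+1))) := by
    intro n
    have h := (hasSum_geometric_of_norm_lt_one (hgeo1 n)).mul_left (w^n)
    have hv : w^(n:ℤ) / (1 + (ρ:ℂ)^(2*(n:ℤ)+1)) = w^n * (1 - -((ρ:ℂ)^(2*n+1)))⁻¹ := by
      rw [sub_neg_eq_add, show (2*(n:ℤ)+1) = ((2*n+1:ℕ):ℤ) by push_cast; ring,
        zpow_natCast, zpow_natCast, div_eq_mul_inv]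
    rw [hv]
    exact h
  -- column sums of F1
  have hE1b : ∀ m : ℕ, HasSum (fun n => F1 (n, m))
      ((-1:ℂ)^m * (ρ:ℂ)^m * (1 - w*(ρ:ℂ)^(2*m))⁻¹) := by
    intro m
    have h := (hasSum_geometric_of_norm_lt_one (hq2 m)).mul_left ((-1:ℂ)^m * (ρ:ℂ)^m)
    have key : (fun n : ℕ => F1 (n, m)) =
        (fun n : ℕ => ((-1:ℂ)^m * (ρ:ℂ)^m) * (w * (ρ:ℂ)^(2*m))^n) := by
      funext n
      simp only [hF1def]
      calc w^n * (-((ρ:ℂ)^(2*n+1)))^m = (-1:ℂ)^m * w^n * (ρ:ℂ)^((2*n+1)*m) := by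
            rw [neg_pow, ← pow_mul]; ring
        _ = ((-1:ℂ)^m * (ρ:ℂ)^m) * (w * (ρ:ℂ)^(2*m))^n := by
            rw [mul_pow, ← pow_mul, show (2*n+1)*m = m + 2*m*n by ring, pow_add]; ring
    rw [key]
    exact h
  -- row sums of F2 give the negative part of the LHS
  have hE2a : ∀ n : ℕ, HasSum (fun m => F2 (n, m))
      (w^(-((n:ℤ)+1)) / (1 + (ρ:ℂ)^(2*(-((n:ℤ)+1))+1))) := by
    intro n
    have h := (hasSum_geometric_of_norm_lt_one (hgeo1 n)).mul_left
      ((w⁻¹)^(n+1) * (ρ:ℂ)^(2*n+1))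
    have key : (fun m : ℕ => F2 (n, m)) =
        (fun m : ℕ => ((w⁻¹)^(n+1) * (ρ:ℂ)^(2*n+1)) * (-((ρ:ℂ)^(2*n+1)))^m) := by
      funext m
      simp only [hF2def]
      conv_rhs => rw [neg_pow, ← pow_mul]
      rw [show (2*n+1)*(m+1) = (2*n+1) + (2*n+1)*m by ring, pow_add]
      ring
    have e1 : w^(-((n:ℤ)+1)) = (w⁻¹)^(n+1) := by
      rw [zpow_neg, show ((n:ℤ)+1) = ((n+1:ℕ):ℤ) by push_cast; ring, zpow_natCast, inv_pow]
    have e2 : (ρ:ℂ)^(2*(-((n:ℤ)+1))+1) = ((ρ:ℂ)^(2*n+1))⁻¹ := by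
      rw [show (2*(-((n:ℤ)+1))+1) = -((2*n+1:ℕ):ℤ) by push_cast; ring, zpow_neg, zpow_natCast]
    have hv : w^(-((n:ℤ)+1)) / (1 + (ρ:ℂ)^(2*(-((n:ℤ)+1))+1)) =
        ((w⁻¹)^(n+1) * (ρ:ℂ)^(2*n+1)) * (1 - -((ρ:ℂ)^(2*n+1)))⁻¹ := by
      rw [e1, e2, sub_neg_eq_add, div_eq_mul_inv, mul_assoc]
      congr 1
      have hx : (ρ:ℂ)^(2*n+1) ≠ 0 := pow_ne_zero _ hr0
      have h1 : (1:ℂ) + ((ρ:ℂ)^(2*n+1))⁻¹ = (1 + (ρ:ℂ)^(2*n+1)) * ((ρ:ℂ)^(2*n+1))⁻¹ := by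
        field_simp
        ring
      rw [h1, mul_inv, inv_inv]
      ring
    rw [key, hv]
    exact h
  -- column sums of F2
  have hE2b : ∀ m : ℕ, HasSum (fun n => F2 (n, m))
      ((-1:ℂ)^m * (ρ:ℂ)^(m+1) / (w - (ρ:ℂ)^(2*m+2))) := by
    intro m
    have h := (hasSum_geometric_of_norm_lt_one (hq3 m)).mul_left
      ((-1:ℂ)^m * w⁻¹ * (ρ:ℂ)^(m+1))
    have key : (fun n : ℕ => F2 (n, m)) =
        (fun n : ℕ => ((-1:ℂ)^m * w⁻¹ * (ρ:ℂ)^(m+1)) * (w⁻¹ * (ρ:ℂ)^(2*m+2))^n) := by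
      funext n
      simp only [hF2def, mul_pow, ← pow_mul]
      rw [show (2*n+1)*(m+1) = (m+1) + n*(2*m+2) by ring, pow_add, pow_succ]
      ring
    have hv : (-1:ℂ)^m * (ρ:ℂ)^(m+1) / (w - (ρ:ℂ)^(2*m+2)) =
        ((-1:ℂ)^m * w⁻¹ * (ρ:ℂ)^(m+1)) * (1 - w⁻¹ * (ρ:ℂ)^(2*m+2))⁻¹ := by
      have h1 : (1 : ℂ) - w⁻¹ * (ρ:ℂ)^(2*m+2) = w⁻¹ * (w - (ρ:ℂ)^(2*m+2)) := by
        rw [mul_sub, inv_mul_cancel₀ hw0]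
      rw [h1, mul_inv, inv_inv, div_eq_mul_inv]
      rw [show ((-1:ℂ)^m * w⁻¹ * (ρ:ℂ)^(m+1)) * (w * (w - (ρ:ℂ)^(2*m+2))⁻¹)
          = (w⁻¹ * w) * ((-1:ℂ)^m * (ρ:ℂ)^(m+1) * (w - (ρ:ℂ)^(2*m+2))⁻¹) from by ring,
        inv_mul_cancel₀ hw0, one_mul]
    rw [key, hv]
    exact h
  -- summability of the four ℕ-indexed families
  have S1 : Summable (fun n : ℕ => w^(n:ℤ) / (1 + (ρ:ℂ)^(2*(n:ℤ)+1))) :=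
    hF1sum.prod.congr fun n => (hE1a n).tsum_eq
  have S2 : Summable (fun n : ℕ => w^(-((n:ℤ)+1)) / (1 + (ρ:ℂ)^(2*(-((n:ℤ)+1))+1))) :=
    hF2sum.prod.congr fun n => (hE2a n).tsum_eq
  have hAsum : Summable (fun m : ℕ => (-1:ℂ)^m * (ρ:ℂ)^m * (1 - w*(ρ:ℂ)^(2*m))⁻¹) :=
    hF1sum.prod_symm.prod.congr fun m => (hE1b m).tsum_eq
  have hBsum : Summable (fun m : ℕ => (-1:ℂ)^m * (ρ:ℂ)^(m+1) / (w - (ρ:ℂ)^(2*m+2))) :=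
    hF2sum.prod_symm.prod.congr fun m => (hE2b m).tsum_eq
  -- pointwise identities for RHS terms at nonnegative and negative indices
  have hgneg : ∀ m : ℕ, (-1:ℂ)^(-((m:ℤ)+1)) * (ρ:ℂ)^(-((m:ℤ)+1)) / ((ρ:ℂ)^(2*(-((m:ℤ)+1))) - w)
      = (-1:ℂ)^(m+1) * (ρ:ℂ)^(m+1) * (1 - w*(ρ:ℂ)^(2*(m+1)))⁻¹ := by
    intro m
    have e0 : (-1:ℂ)^(-((m:ℤ)+1)) = (-1:ℂ)^(m+1) := by
      rw [show -((m:ℤ)+1) = -((m+1:ℕ):ℤ) by push_cast; ring, zpow_neg, zpow_natCast,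
        ← inv_pow, inv_neg, inv_one]
    have e1 : (ρ:ℂ)^(-((m:ℤ)+1)) = ((ρ:ℂ)^(m+1))⁻¹ := by
      rw [show -((m:ℤ)+1) = -((m+1:ℕ):ℤ) by push_cast; ring, zpow_neg, zpow_natCast]
    have e2 : (ρ:ℂ)^(2*(-((m:ℤ)+1))) = ((ρ:ℂ)^(2*(m+1)))⁻¹ := by
      rw [show 2*(-((m:ℤ)+1)) = -((2*(m+1):ℕ):ℤ) by push_cast; ring, zpow_neg, zpow_natCast]
    have hX : ((ρ:ℂ)^(2*(m+1))) ≠ 0 := pow_ne_zero _ hr0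
    have hx : ((ρ:ℂ)^(m+1)) ≠ 0 := pow_ne_zero _ hr0
    have hd2 : (1:ℂ) - w * (ρ:ℂ)^(2*(m+1)) ≠ 0 := hden2 (m+1)
    have h1 : ((ρ:ℂ)^(2*(m+1)))⁻¹ - w = ((ρ:ℂ)^(2*(m+1)))⁻¹ * (1 - w * (ρ:ℂ)^(2*(m+1))) := by
      rw [mul_sub, mul_one, show ((ρ:ℂ)^(2*(m+1)))⁻¹ * (w * (ρ:ℂ)^(2*(m+1)))
        = (((ρ:ℂ)^(2*(m+1)))⁻¹ * (ρ:ℂ)^(2*(m+1))) * w from by ring, inv_mul_cancel₀ hX, one_mul]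
    have h2 : (ρ:ℂ)^(2*(m+1)) = (ρ:ℂ)^(m+1) * (ρ:ℂ)^(m+1) := by
      rw [← pow_add]; congr 1; ring
    rw [e0, e1, e2, h1, div_eq_mul_inv, mul_inv, inv_inv]
    rw [show ((-1:ℂ)^(m+1) * ((ρ:ℂ)^(m+1))⁻¹) * ((ρ:ℂ)^(2*(m+1)) * (1 - w * (ρ:ℂ)^(2*(m+1)))⁻¹)
      = ((ρ:ℂ)^(2*(m+1)) * ((ρ:ℂ)^(m+1))⁻¹) * ((-1:ℂ)^(m+1) * (1 - w * (ρ:ℂ)^(2*(m+1)))⁻¹)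
        from by ring]
    rw [h2, mul_assoc ((ρ:ℂ)^(m+1)), mul_inv_cancel₀ hx, mul_one]
    ring
  have hBnat : ∀ m : ℕ, (-1:ℂ)^m * (ρ:ℂ)^(m+1) / (w - (ρ:ℂ)^(2*m+2))
      = (-1:ℂ)^((m+1:ℕ):ℤ) * (ρ:ℂ)^((m+1:ℕ):ℤ) / ((ρ:ℂ)^(2*((m+1:ℕ):ℤ)) - w) := by
    intro m
    have e0 : (-1:ℂ)^((m+1:ℕ):ℤ) = (-1:ℂ)^(m+1) := zpow_natCast _ _
    have e1 : (ρ:ℂ)^((m+1:ℕ):ℤ) = (ρ:ℂ)^(m+1) := zpow_natCast _ _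
    have e2 : (ρ:ℂ)^(2*((m+1:ℕ):ℤ)) = (ρ:ℂ)^(2*m+2) := by
      rw [show 2*((m+1:ℕ):ℤ) = ((2*m+2:ℕ):ℤ) by push_cast; ring, zpow_natCast]
    have hd : (ρ:ℂ)^(2*m+2) - w ≠ 0 :=
      sub_ne_zero.mpr (Ne.symm (sub_ne_zero.mp (hden3 m)))
    rw [e0, e1, e2, div_eq_div_iff (hden3 m) hd, pow_succ]
    ring
  -- summability of the RHS pieces
  have SG2 : Summable (fun m : ℕ =>
      (-1:ℂ)^(-((m:ℤ)+1)) * (ρ:ℂ)^(-((m:ℤ)+1)) / ((ρ:ℂ)^(2*(-((m:ℤ)+1))) - w)) := by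
    have h := (summable_nat_add_iff
      (f := fun m : ℕ => (-1:ℂ)^m * (ρ:ℂ)^m * (1 - w*(ρ:ℂ)^(2*m))⁻¹) 1).mpr hAsum
    exact h.congr fun m => (hgneg m).symm
  have SG1 : Summable (fun m : ℕ =>
      (-1:ℂ)^((m:ℤ)) * (ρ:ℂ)^((m:ℤ)) / ((ρ:ℂ)^(2*((m:ℤ))) - w)) := by
    apply (summable_nat_add_iff
      (f := fun m : ℕ => (-1:ℂ)^((m:ℤ)) * (ρ:ℂ)^((m:ℤ)) / ((ρ:ℂ)^(2*((m:ℤ))) - w)) 1).mp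
    exact hBsum.congr fun m => by
      have := hBnat m
      push_cast at this ⊢
      exact this
  -- Fubini on both double families
  have T1 : (∑' n : ℕ, w^(n:ℤ) / (1 + (ρ:ℂ)^(2*(n:ℤ)+1)))
      = ∑' m : ℕ, ((-1:ℂ)^m * (ρ:ℂ)^m * (1 - w*(ρ:ℂ)^(2*m))⁻¹) :=
    calc (∑' n : ℕ, w^(n:ℤ) / (1 + (ρ:ℂ)^(2*(n:ℤ)+1)))
        = ∑' (n : ℕ) (m : ℕ), F1 (n, m) := tsum_congr fun n => ((hE1a n).tsum_eq).symm
      _ = ∑' (m : ℕ) (n : ℕ), F1 (n, m) := (Summable.tsum_comm (f := fun n m => F1 (n, m)) hF1sum).symm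
      _ = _ := tsum_congr fun m => (hE1b m).tsum_eq
  have T2 : (∑' n : ℕ, w^(-((n:ℤ)+1)) / (1 + (ρ:ℂ)^(2*(-((n:ℤ)+1))+1)))
      = ∑' m : ℕ, ((-1:ℂ)^m * (ρ:ℂ)^(m+1) / (w - (ρ:ℂ)^(2*m+2))) :=
    calc (∑' n : ℕ, w^(-((n:ℤ)+1)) / (1 + (ρ:ℂ)^(2*(-((n:ℤ)+1))+1)))
        = ∑' (n : ℕ) (m : ℕ), F2 (n, m) := tsum_congr fun n => ((hE2a n).tsum_eq).symm
      _ = ∑' (m : ℕ) (n : ℕ), F2 (n, m) := (Summable.tsum_comm (f := fun n m => F2 (n, m)) hF2sum).symm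
      _ = _ := tsum_congr fun m => (hE2b m).tsum_eq
  -- assemble
  rw [tsum_of_nat_of_neg_add_one (f := fun n : ℤ => w^n / (1 + (ρ:ℂ)^(2*n+1))) S1 S2,
    tsum_of_nat_of_neg_add_one
      (f := fun m : ℤ => (-1:ℂ)^m * (ρ:ℂ)^m / ((ρ:ℂ)^(2*m) - w)) SG1 SG2,
    T1, T2]
  rw [Summable.tsum_eq_zero_add hAsum, Summable.tsum_eq_zero_add SG1]
  rw [tsum_congr hgneg, tsum_congr fun m => (hBnat m).symm]
  norm_num
  ring
end
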